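/- Let Q_{S6}(x) = 1 + Σ_{n≥1} |A_{S6}(n)| xⁿ be the formal power series in x over ℚ counting the paths in A_{S6}(n). Then 2x(x−5) · Q_{S6}(x) = −1 − 4x + x² + √((1−x)(1−11x+7x²−x³)), where the square root denotes the unique formal power series with constant term 1 whose square is (1−x)(1−11x+7x²−x³). -/

import Mathlib

/-- A lattice path from `(0,0)` to `(2n,0)` with steps in `S` that never goes
below the x-axis, encoded as the list of its steps. -/
def IsPath (S : Set (ℤ × ℤ)) (n : ℕ) (p : List (ℤ × ℤ)) : Prop :=
  (∀ s ∈ p, s ∈ S) ∧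
  (p.map Prod.fst).sum = 2 * n ∧
  (p.map Prod.snd).sum = 0 ∧
  ∀ q : List (ℤ × ℤ), q <+: p → 0 ≤ (q.map Prod.snd).sum

def S1 : Set (ℤ × ℤ) := {(1, 1), (1, -1)}
def S2 : Set (ℤ × ℤ) := {s | ∃ r : ℤ, 0 < r ∧ (s = (r, r) ∨ s = (r, -r))}
def S3 : Set (ℤ × ℤ) := {(1, 1), (1, -1), (2, 0)}
def S4 : Set (ℤ × ℤ) := {s | ∃ r : ℤ, 0 < r ∧ (s = (r, r) ∨ s = (r, -r) ∨ s = (2 * r, 0))}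
def S5 : Set (ℤ × ℤ) := {s | s = (1, 1) ∨ s = (1, -1) ∨ ∃ r : ℤ, 0 < r ∧ s = (2 * r, 0)}
def S6 : Set (ℤ × ℤ) := {s | (∃ r : ℤ, 0 < r ∧ (s = (r, r) ∨ s = (r, -r))) ∨ s = (2, 0)}

/-- Number of runs: vertices lying between two consecutive steps of the same kind. -/
def runs (p : List (ℤ × ℤ)) : ℕ :=
  (p.zip p.tail).countP (fun q => q.1 == q.2)

/-- Number of diagonal runs: vertices between two consecutive equal non-horizontal steps. -/
def dr (p : List (ℤ × ℤ)) : ℕ :=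
  (p.zip p.tail).countP (fun q => q.1 == q.2 && q.1.2 != 0)

/-- Number of horizontal runs: vertices between two consecutive horizontal steps. -/
def hr (p : List (ℤ × ℤ)) : ℕ :=
  (p.zip p.tail).countP (fun q => q.1 == q.2 && q.1.2 == 0)

/-- The path has no horizontal step lying on the x-axis. -/
def NoFlatOnAxis (p : List (ℤ × ℤ)) : Prop :=
  ∀ q s, q ++ [s] <+: p → s.2 = 0 → (q.map Prod.snd).sum ≠ 0

/-!
Splitting off a first flat step, or cutting at the first return to the x-axis, gives
`W = 1 + xW + EW`, `U = EW` and `B = E(1 + D)`, where `W`, `U`, `D`, `B`, `E` count all paths,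
those starting with an up step, those ending with a down step, those doing both, and the elevated
paths (touching the axis only at their endpoints); for the paths without flat step on the axis,
`Q = 1 + EQ`. An elevated path of semilength `n + 1` arises uniquely from a path of semilength `n`
by raising it one unit and then, at the start, either prepending a step `(1,1)` or lengthening the
first step if it is an up step, and likewise at the end; hence `E = x(W + U + D + B)`, while
`D = U` by reflection. Eliminating gives `E² - (1 - 4x + x²)E + x = 0`, so
`x(x - 5)Q² + (1 + 4x - x²)Q - 1 = 0`: completing the square, `2x(x - 5)Q + 1 + 4x - x²` is a
square root of `(1 - x)(1 - 11x + 7x² - x³)`, namely the one with constant term `1`.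
-/

open Finset.HasAntidiagonal (antidiagonal mem_antidiagonal)

namespace List

variable {α : Type*}

theorem forall_prefix_cons {P : List α → Prop} {x : α} {l : List α} :
    (∀ q, q <+: x :: l → P q) ↔ P [] ∧ ∀ q, q <+: l → P (x :: q) := by
  refine ⟨fun h => ⟨h [] nil_prefix, fun q hq => h _ (cons_prefix_cons.2 ⟨rfl, hq⟩)⟩, ?_⟩
  rintro ⟨h₀, h⟩ (_ | ⟨y, q⟩) hq
  · exact h₀
  · obtain ⟨rfl, hq'⟩ := cons_prefix_cons.1 hq
    exact h q hq'

theorem forall_prefix_append {P : List α → Prop} {l₁ l₂ : List α} :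
    (∀ q, q <+: l₁ ++ l₂ → P q) ↔ (∀ q, q <+: l₁ → P q) ∧ ∀ q, q <+: l₂ → P (l₁ ++ q) := by
  induction l₁ generalizing P with
  | nil => simpa using fun h => h [] nil_prefix
  | cons x l ih => simp only [cons_append, forall_prefix_cons, ih, and_assoc]

theorem forall_concat_prefix_cons {R : List α → α → Prop} {x : α} {l : List α} :
    (∀ q y, q ++ [y] <+: x :: l → R q y) ↔ R [] x ∧ ∀ q y, q ++ [y] <+: l → R (x :: q) y := by
  refine ⟨fun h => ⟨h [] x (by simp), fun q y hq => h (x :: q) y (by simpa using hq)⟩, ?_⟩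
  rintro ⟨h₀, h⟩ (_ | ⟨z, q⟩) y hq
  · obtain rfl : y = x := by simpa using hq
    exact h₀
  · obtain ⟨rfl, hq'⟩ := cons_prefix_cons.1 hq
    exact h q y hq'

end List

theorem ncard_eq_sum_antidiagonal_of_unique_append {α : Type*} {A : Set (List α)}
    {B C : ℕ → Set (List α)} {n : ℕ}
    (hB : ∀ k, (B k).Finite) (hC : ∀ l, (C l).Finite)
    (hB_disjoint : ∀ k k' e, e ∈ B k → e ∈ B k' → k = k')
    (hB_prefix : ∀ k k' e e' r r', e ∈ B k → e' ∈ B k' → e ++ r = e' ++ r' → e = e')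
    (hA : ∀ p, p ∈ A ↔ ∃ kl ∈ antidiagonal n, ∃ e ∈ B kl.1, ∃ r ∈ C kl.2, e ++ r = p) :
    A.ncard = ∑ kl ∈ antidiagonal n, (B kl.1).ncard * (C kl.2).ncard := by
  have := fun k => (hB k).to_subtype
  have := fun l => (hC l).to_subtype
  let f : (Σ kl : antidiagonal n, B kl.1.1 × C kl.1.2) → A := fun x =>
    ⟨x.2.1 ++ x.2.2, (hA _).2 ⟨x.1, x.1.2, x.2.1, x.2.1.2, x.2.2, x.2.2.2, rfl⟩⟩
  have hf : f.Bijective := by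
    refine ⟨?_, fun ⟨p, hp⟩ => ?_⟩
    · rintro ⟨⟨⟨k, l⟩, hkl⟩, ⟨e, he⟩, ⟨r, hr⟩⟩ ⟨⟨⟨k', l'⟩, hkl'⟩, ⟨e', he'⟩, ⟨r', hr'⟩⟩ h
      simp only [f, Subtype.mk.injEq] at h
      obtain rfl := hB_prefix _ _ _ _ _ _ he he' h
      obtain rfl := List.append_cancel_left h
      obtain rfl : k = k' := hB_disjoint _ _ _ he he'
      obtain rfl : l = l' := by rw [mem_antidiagonal] at hkl hkl'; omega
      rfl
    · obtain ⟨kl, hkl, e, he, r, hr, rfl⟩ := (hA p).1 hp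
      exact ⟨⟨⟨kl, hkl⟩, ⟨e, he⟩, ⟨r, hr⟩⟩, rfl⟩
  rw [← Nat.card_coe_set_eq, ← Nat.card_congr (Equiv.ofBijective f hf), Nat.card_sigma]
  simp only [Nat.card_prod, Nat.card_coe_set_eq]
  exact Finset.sum_coe_sort (antidiagonal n) fun kl => (B kl.1).ncard * (C kl.2).ncard

theorem PowerSeries.eq_of_sq_eq_sq {R : Type*} [CommRing R] [NoZeroDivisors R] [IsAddTorsionFree R]
    {f g : PowerSeries R} (h : f ^ 2 = g ^ 2) (hc : constantCoeff f = constantCoeff g)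
    (h₀ : constantCoeff f ≠ 0) : f = g := by
  refine (sq_eq_sq_iff_eq_or_eq_neg.1 h).resolve_right fun hfg => h₀ ?_
  rw [hfg, map_neg] at hc ⊢
  rw [neg_eq_self.1 hc, neg_zero]

namespace S6Path

open List

section GeneratingFunction

open PowerSeries

variable {α : Type*}

noncomputable def gf (A : ℕ → Set α) : PowerSeries ℚ := mk fun n => ((A n).ncard : ℚ)

@[simp] theorem coeff_gf (A : ℕ → Set α) (n : ℕ) : coeff n (gf A) = (A n).ncard :=
  coeff_mk _ _

@[simp] theorem constantCoeff_gf (A : ℕ → Set α) :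
    constantCoeff (gf A) = (A 0).ncard := by
  rw [← coeff_zero_eq_constantCoeff_apply, coeff_gf]

theorem gf_eq_mul {A B C : ℕ → Set α}
    (h : ∀ n, (A n).ncard = ∑ kl ∈ antidiagonal n, (B kl.1).ncard * (C kl.2).ncard) :
    gf A = gf B * gf C := by
  ext n
  simp [coeff_mul, h]

end GeneratingFunction

def width (p : List (ℤ × ℤ)) : ℤ := (p.map Prod.fst).sum

def height (p : List (ℤ × ℤ)) : ℤ := (p.map Prod.snd).sum

@[simp] theorem width_nil : width [] = 0 := rfl
@[simp] theorem height_nil : height [] = 0 := rfl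
@[simp] theorem width_cons (s : ℤ × ℤ) (p : List (ℤ × ℤ)) : width (s :: p) = s.1 + width p := by
  simp [width]
@[simp] theorem height_cons (s : ℤ × ℤ) (p : List (ℤ × ℤ)) :
    height (s :: p) = s.2 + height p := by
  simp [height]
@[simp] theorem width_append (p q : List (ℤ × ℤ)) : width (p ++ q) = width p + width q := by
  simp [width]
@[simp] theorem height_append (p q : List (ℤ × ℤ)) : height (p ++ q) = height p + height q := by
  simp [height]

def StaysNonneg (h : ℤ) (p : List (ℤ × ℤ)) : Prop := ∀ q, q <+: p → 0 ≤ h + height q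

def NoFlatFrom (h : ℤ) (p : List (ℤ × ℤ)) : Prop :=
  ∀ q s, q ++ [s] <+: p → s.2 = 0 → h + height q ≠ 0

section StaysNonneg

variable {h : ℤ} {p : List (ℤ × ℤ)}

@[simp] theorem staysNonneg_nil : StaysNonneg h [] ↔ 0 ≤ h := by simp [StaysNonneg]

@[simp] theorem staysNonneg_cons {s : ℤ × ℤ} :
    StaysNonneg h (s :: p) ↔ 0 ≤ h ∧ StaysNonneg (h + s.2) p := by
  simp [StaysNonneg, forall_prefix_cons, add_assoc]

theorem StaysNonneg.nonneg (hp : StaysNonneg h p) : 0 ≤ h := by simpa using hp [] nil_prefix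

theorem StaysNonneg.nonneg_add_height (hp : StaysNonneg h p) : 0 ≤ h + height p :=
  hp p prefix_rfl

@[simp] theorem staysNonneg_append {p' : List (ℤ × ℤ)} :
    StaysNonneg h (p ++ p') ↔ StaysNonneg h p ∧ StaysNonneg (h + height p) p' := by
  simp [StaysNonneg, forall_prefix_append, add_assoc]

end StaysNonneg

section NoFlatFrom

variable {h : ℤ} {p : List (ℤ × ℤ)}

@[simp] theorem noFlatFrom_nil : NoFlatFrom h [] := by simp [NoFlatFrom]

@[simp] theorem noFlatFrom_cons {s : ℤ × ℤ} :
    NoFlatFrom h (s :: p) ↔ (s.2 = 0 → h ≠ 0) ∧ NoFlatFrom (h + s.2) p := by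
  rw [NoFlatFrom, NoFlatFrom, forall_concat_prefix_cons]
  simp [add_assoc]

@[simp] theorem noFlatFrom_append {p' : List (ℤ × ℤ)} :
    NoFlatFrom h (p ++ p') ↔ NoFlatFrom h p ∧ NoFlatFrom (h + height p) p' := by
  induction p generalizing h with
  | nil => simp
  | cons s p ih => simp [ih, add_assoc, and_assoc]

theorem StaysNonneg.noFlatFrom_add_one (hp : StaysNonneg h p) : NoFlatFrom (h + 1) p :=
  fun q _ hq _ => by have := hp q (prefix_append q _ |>.trans hq); omega

end NoFlatFrom

section Steps

theorem mem_S6 {s : ℤ × ℤ} :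
    s ∈ S6 ↔ (0 < s.2 ∧ s.1 = s.2) ∨ (s.2 < 0 ∧ s.1 = -s.2) ∨ s = (2, 0) := by
  obtain ⟨x, y⟩ := s
  simp only [S6, Set.mem_ofPred_eq, Prod.mk.injEq]
  constructor
  · rintro (⟨r, hr, ⟨rfl, rfl⟩ | ⟨rfl, rfl⟩⟩ | h) <;> omega
  · rintro (⟨hy, rfl⟩ | ⟨hy, rfl⟩ | h)
    · exact Or.inl ⟨x, hy, Or.inl ⟨rfl, rfl⟩⟩
    · exact Or.inl ⟨-y, by omega, Or.inr ⟨rfl, by ring⟩⟩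
    · exact Or.inr h

@[simp] theorem up_mem_S6 {a : ℤ} : (a, a) ∈ S6 ↔ 0 < a := by simp [mem_S6]; omega

@[simp] theorem down_mem_S6 {b : ℤ} : (b, -b) ∈ S6 ↔ 0 < b := by simp [mem_S6]; omega

@[simp] theorem flat_mem_S6 : ((2, 0) : ℤ × ℤ) ∈ S6 := by simp [mem_S6]

theorem flip_mem_S6 {s : ℤ × ℤ} : (s.1, -s.2) ∈ S6 ↔ s ∈ S6 := by
  obtain ⟨x, y⟩ := s
  simp only [mem_S6, Prod.mk.injEq]; omega

theorem exists_eq_up_of_mem_S6 {s : ℤ × ℤ} (hs : s ∈ S6) (h : 0 < s.2) :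
    ∃ a, 0 < a ∧ s = (a, a) := by
  rcases mem_S6.1 hs with ⟨-, h'⟩ | ⟨h', -⟩ | rfl
  · exact ⟨s.2, h, Prod.ext h' rfl⟩
  · omega
  · simp at h

theorem exists_eq_down_of_mem_S6 {s : ℤ × ℤ} (hs : s ∈ S6) (h : s.2 < 0) :
    ∃ b, 0 < b ∧ s = (b, -b) := by
  rcases mem_S6.1 hs with ⟨h', -⟩ | ⟨-, h'⟩ | rfl
  · omega
  · exact ⟨s.1, by omega, Prod.ext rfl (by omega)⟩
  · simp at h

theorem eq_flat_of_mem_S6 {s : ℤ × ℤ} (hs : s ∈ S6) (h : s.2 = 0) : s = (2, 0) := by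
  rcases mem_S6.1 hs with ⟨h', -⟩ | ⟨h', -⟩ | h'
  · omega
  · omega
  · exact h'

theorem fst_pos_of_mem_S6 {s : ℤ × ℤ} (hs : s ∈ S6) : 0 < s.1 := by
  rcases mem_S6.1 hs with h | h | rfl <;> omega

variable {p : List (ℤ × ℤ)}

theorem width_nonneg (hp : ∀ s ∈ p, s ∈ S6) : 0 ≤ width p := by
  induction p with
  | nil => simp
  | cons s p ih =>
    simp only [forall_mem_cons] at hp
    have := fst_pos_of_mem_S6 hp.1
    have := ih hp.2
    simp only [width_cons]
    omega

theorem width_sub_height_even (hp : ∀ s ∈ p, s ∈ S6) : Even (width p - height p) := by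
  induction p with
  | nil => simp
  | cons s p ih =>
    simp only [forall_mem_cons] at hp
    obtain ⟨k, hk⟩ := ih hp.2
    simp only [width_cons, height_cons]
    rcases mem_S6.1 hp.1 with h | h | rfl
    · exact ⟨k, by omega⟩
    · exact ⟨k - s.2, by omega⟩
    · exact ⟨k + 1, by simp; omega⟩

theorem finite_setOf_width_le (w : ℕ) :
    {p : List (ℤ × ℤ) | (∀ s ∈ p, s ∈ S6) ∧ width p ≤ w}.Finite := by
  induction w with
  | zero =>
    refine (Set.finite_singleton []).subset ?_
    rintro (_ | ⟨s, p⟩) ⟨hp, hw⟩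
    · rfl
    · simp only [forall_mem_cons] at hp
      have := fst_pos_of_mem_S6 hp.1
      have := width_nonneg hp.2
      simp only [width_cons, CharP.cast_eq_zero] at hw
      omega
  | succ w ih =>
    let steps : Set (ℤ × ℤ) := Set.Icc 1 (w + 1 : ℤ) ×ˢ Set.Icc (-(w + 1 : ℤ)) (w + 1)
    have hsteps : steps.Finite := (Set.finite_Icc _ _).prod (Set.finite_Icc _ _)
    refine ((hsteps.image2 List.cons ih).insert []).subset ?_
    rintro (_ | ⟨s, p⟩) ⟨hp, hw⟩
    · exact Set.mem_insert _ _
    · simp only [forall_mem_cons] at hp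
      have := width_nonneg hp.2
      have := mem_S6.1 hp.1
      simp only [width_cons, Nat.cast_add, Nat.cast_one] at hw
      refine Or.inr ⟨s, ⟨⟨?_, ?_⟩, ?_, ?_⟩, p, ⟨hp.2, ?_⟩, rfl⟩ <;>
        rcases this with h | h | rfl <;> omega

theorem exists_width_eq_two_mul {p : List (ℤ × ℤ)} (hp : ∀ s ∈ p, s ∈ S6) (h : height p = 0) :
    ∃ k : ℕ, width p = 2 * k := by
  obtain ⟨k, hk⟩ := width_sub_height_even hp
  have := width_nonneg hp
  exact ⟨k.toNat, by omega⟩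

end Steps

section Reflect

def reflect (p : List (ℤ × ℤ)) : List (ℤ × ℤ) := (p.map fun s => (s.1, -s.2)).reverse

@[simp] theorem reflect_nil : reflect [] = [] := rfl

@[simp] theorem reflect_cons (s : ℤ × ℤ) (p : List (ℤ × ℤ)) :
    reflect (s :: p) = reflect p ++ [(s.1, -s.2)] := by
  simp [reflect]

@[simp] theorem reflect_append (p q : List (ℤ × ℤ)) :
    reflect (p ++ q) = reflect q ++ reflect p := by
  simp [reflect]

theorem reflect_involutive : Function.Involutive reflect := fun p => by
  simp [reflect, Function.comp_def]

@[simp] theorem width_reflect (p : List (ℤ × ℤ)) : width (reflect p) = width p := by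
  induction p with
  | nil => rfl
  | cons s p ih => simp [ih, add_comm]

@[simp] theorem height_reflect (p : List (ℤ × ℤ)) : height (reflect p) = -height p := by
  induction p with
  | nil => rfl
  | cons s p ih => simp [ih]

theorem forall_mem_reflect {p : List (ℤ × ℤ)} : (∀ s ∈ reflect p, s ∈ S6) ↔ ∀ s ∈ p, s ∈ S6 := by
  simp only [reflect, mem_reverse, forall_mem_map, flip_mem_S6]

theorem staysNonneg_reflect {h : ℤ} {p : List (ℤ × ℤ)} :
    StaysNonneg h (reflect p) ↔ StaysNonneg (h - height p) p := by
  induction p generalizing h with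
  | nil => simp
  | cons s p ih =>
    simp only [reflect_cons, staysNonneg_append, ih, height_reflect, staysNonneg_cons,
      staysNonneg_nil, height_cons]
    constructor
    · rintro ⟨hp, -, hs⟩
      exact ⟨by omega, by convert hp using 2; ring⟩
    · rintro ⟨hs, hp⟩
      have := hp.nonneg
      exact ⟨by convert hp using 2; ring, by omega, by omega⟩

end Reflect

section Paths

def paths (n : ℕ) : Set (List (ℤ × ℤ)) := {p | IsPath S6 n p}

def StartsUp (p : List (ℤ × ℤ)) : Prop := ∃ a t, 0 < a ∧ p = (a, a) :: t

def EndsDown (p : List (ℤ × ℤ)) : Prop := ∃ t b, 0 < b ∧ p = t ++ [(b, -b)]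

def upPaths (n : ℕ) : Set (List (ℤ × ℤ)) := paths n ∩ {p | StartsUp p}

def downPaths (n : ℕ) : Set (List (ℤ × ℤ)) := paths n ∩ {p | EndsDown p}

def upDownPaths (n : ℕ) : Set (List (ℤ × ℤ)) := upPaths n ∩ {p | EndsDown p}

def nilOrDownPaths (n : ℕ) : Set (List (ℤ × ℤ)) := paths n ∩ {p | p = [] ∨ EndsDown p}

/-- Elevated paths `(a,a) :: m ++ [(b,-b)]`: the middle part `m`, started at height `a`, stays at
height at least `1`, so the path touches the x-axis only at its endpoints. -/
def elevated (n : ℕ) : Set (List (ℤ × ℤ)) :=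
  {e | ∃ a m b, e = (a, a) :: (m ++ [(b, -b)]) ∧ (∀ s ∈ m, s ∈ S6) ∧ StaysNonneg (a - 1) m ∧
    a + height m = b ∧ a + width m + b = 2 * n}

def axisFlatFree (n : ℕ) : Set (List (ℤ × ℤ)) := {p | IsPath S6 n p ∧ NoFlatOnAxis p}

variable {n : ℕ} {p : List (ℤ × ℤ)}

theorem mem_paths :
    p ∈ paths n ↔ (∀ s ∈ p, s ∈ S6) ∧ width p = 2 * n ∧ height p = 0 ∧ StaysNonneg 0 p := by
  simp [paths, IsPath, StaysNonneg, width, height]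

theorem mem_axisFlatFree : p ∈ axisFlatFree n ↔ p ∈ paths n ∧ NoFlatFrom 0 p := by
  simp [axisFlatFree, paths, NoFlatOnAxis, NoFlatFrom, height]

theorem paths_finite (n : ℕ) : (paths n).Finite :=
  (finite_setOf_width_le (2 * n)).subset fun p hp => by
    rw [mem_paths] at hp
    exact ⟨hp.1, by push_cast; omega⟩

theorem paths_zero : paths 0 = {[]} := by
  ext (_ | ⟨s, p⟩)
  · simp [mem_paths]
  · simp only [mem_paths, forall_mem_cons, width_cons, Set.mem_singleton_iff, reduceCtorEq,
      iff_false, not_and]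
    rintro ⟨hs, hp⟩ hw
    have := fst_pos_of_mem_S6 hs
    have := width_nonneg hp
    omega

theorem append_mem_paths {k l : ℕ} {p q : List (ℤ × ℤ)} (hp : p ∈ paths k) (hq : q ∈ paths l) :
    p ++ q ∈ paths (k + l) := by
  obtain ⟨hpS, hpw, hph, hpn⟩ := mem_paths.1 hp
  obtain ⟨hqS, hqw, hqh, hqn⟩ := mem_paths.1 hq
  refine mem_paths.2 ⟨forall_mem_append.2 ⟨hpS, hqS⟩, by simp [hpw, hqw]; ring, by simp [hph, hqh],
    ?_⟩
  simpa [hph] using ⟨hpn, hqn⟩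

theorem reflect_mem_paths (hp : p ∈ paths n) : reflect p ∈ paths n := by
  rw [mem_paths] at *
  exact ⟨forall_mem_reflect.2 hp.1, by simp [hp.2.1], by simp [hp.2.2.1],
    by simpa [staysNonneg_reflect, hp.2.2.1] using hp.2.2.2⟩

theorem ne_nil_of_mem_paths_succ {p : List (ℤ × ℤ)} (hp : p ∈ paths (n + 1)) : p ≠ [] := by
  rintro rfl
  have := (mem_paths.1 hp).2.1
  simp at this
  omega

theorem upPaths_zero : upPaths 0 = ∅ := by
  rw [upPaths, paths_zero, Set.singleton_inter_eq_empty]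
  rintro ⟨a, t, -, h⟩
  exact cons_ne_nil _ _ h.symm

theorem downPaths_zero : downPaths 0 = ∅ := by
  rw [downPaths, paths_zero, Set.singleton_inter_eq_empty]
  rintro ⟨t, b, -, h⟩
  simp at h

theorem axisFlatFree_zero : axisFlatFree 0 = {[]} := by
  ext p
  simp only [mem_axisFlatFree, paths_zero, Set.mem_singleton_iff, and_iff_left_iff_imp]
  rintro rfl
  exact noFlatFrom_nil

theorem StartsUp.append {q : List (ℤ × ℤ)} (hp : StartsUp p) : StartsUp (p ++ q) := by
  obtain ⟨a, t, ha, rfl⟩ := hp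
  exact ⟨a, t ++ q, ha, rfl⟩

theorem EndsDown.append_left {q : List (ℤ × ℤ)} (hq : EndsDown q) : EndsDown (p ++ q) := by
  obtain ⟨t, b, hb, rfl⟩ := hq
  exact ⟨p ++ t, b, hb, by simp⟩

theorem EndsDown.of_append {q : List (ℤ × ℤ)} (h : EndsDown (p ++ q)) (hq : q ≠ []) :
    EndsDown q := by
  obtain ⟨t, b, hb, h⟩ := h
  obtain ⟨q, y, rfl⟩ := (eq_nil_or_concat' q).resolve_left hq
  rw [← append_assoc] at h
  obtain ⟨-, hy⟩ := append_inj' h rfl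
  exact ⟨q, b, hb, by rw [hy]⟩

theorem paths_succ_diff_startsUp (n : ℕ) :
    paths (n + 1) \ {p | StartsUp p} = cons (2, 0) '' paths n := by
  ext p
  constructor
  · rintro ⟨hp, hup⟩
    obtain _ | ⟨s, t⟩ := p
    · exact absurd rfl (ne_nil_of_mem_paths_succ hp)
    simp only [mem_paths, forall_mem_cons, width_cons, height_cons, staysNonneg_cons, le_refl,
      zero_add, true_and] at hp
    obtain ⟨⟨hs, ht⟩, hw, hh, hnn⟩ := hp
    have := hnn.nonneg
    obtain hs₂ | hs₂ := this.lt_or_eq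
    · obtain ⟨a, ha, rfl⟩ := exists_eq_up_of_mem_S6 hs hs₂
      exact absurd ⟨a, t, ha, rfl⟩ hup
    · obtain rfl := eq_flat_of_mem_S6 hs hs₂.symm
      exact ⟨t, mem_paths.2 ⟨ht, by push_cast at hw; omega, by simpa using hh, by simpa using hnn⟩,
        rfl⟩
  · rintro ⟨t, ht, rfl⟩
    obtain ⟨hS, hw, hh, hnn⟩ := mem_paths.1 ht
    refine ⟨mem_paths.2 ⟨forall_mem_cons.2 ⟨flat_mem_S6, hS⟩, by simp [hw]; ring, by simp [hh],
      by simpa using hnn⟩, ?_⟩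
    rintro ⟨a, t', ha, h⟩
    simp only [cons.injEq, Prod.mk.injEq] at h
    omega

theorem ncard_paths_succ (n : ℕ) :
    (paths (n + 1)).ncard = (paths n).ncard + (upPaths (n + 1)).ncard := by
  rw [← Set.ncard_inter_add_ncard_sdiff_eq_ncard _ {p | StartsUp p} (paths_finite _),
    paths_succ_diff_startsUp, Set.ncard_image_of_injective _ cons_injective, add_comm]
  rfl

theorem downPaths_eq_image_reflect (n : ℕ) : downPaths n = reflect '' upPaths n := by
  ext p
  constructor
  · rintro ⟨hp, t, b, hb, rfl⟩
    exact ⟨reflect (t ++ [(b, -b)]), ⟨reflect_mem_paths hp, b, reflect t, hb, by simp⟩,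
      reflect_involutive _⟩
  · rintro ⟨q, ⟨hq, a, t, ha, rfl⟩, rfl⟩
    exact ⟨reflect_mem_paths hq, reflect t, a, ha, by simp⟩

theorem nilOrDownPaths_succ (n : ℕ) : nilOrDownPaths (n + 1) = downPaths (n + 1) := by
  ext p
  simp only [nilOrDownPaths, downPaths, Set.mem_inter_iff, Set.mem_ofPred_eq]
  exact and_congr_right fun hp => or_iff_right (ne_nil_of_mem_paths_succ hp)

theorem StartsUp.exists_eq_of_endsDown (hu : StartsUp p) (hd : EndsDown p) :
    ∃ a m b, 0 < a ∧ 0 < b ∧ p = (a, a) :: (m ++ [(b, -b)]) := by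
  obtain ⟨a, t, ha, rfl⟩ := hu
  have ht : t ≠ [] := by
    rintro rfl
    obtain ⟨t', b, hb, h⟩ := hd
    have := congrArg getLast? h
    simp at this
    omega
  obtain ⟨m, b, hb, rfl⟩ := EndsDown.of_append (p := [(a, a)]) hd ht
  exact ⟨a, m, b, ha, hb, rfl⟩

end Paths

section Elevated

variable {k n : ℕ} {e p : List (ℤ × ℤ)}

theorem elevated_subset_paths : elevated n ⊆ paths n := by
  rintro _ ⟨a, m, b, rfl, hm, hnn, hh, hw⟩
  have := hnn.nonneg
  have := hnn.nonneg_add_height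
  rw [mem_paths]
  refine ⟨?_, by simp; omega, by simp; omega, ?_⟩
  · simp only [forall_mem_cons, forall_mem_append, up_mem_S6, down_mem_S6, mem_singleton,
      forall_eq]
    exact ⟨by omega, hm, by omega⟩
  simp only [zero_add, staysNonneg_cons, staysNonneg_append, staysNonneg_nil, le_refl, true_and]
  refine ⟨?_, by simp; omega⟩
  exact fun q hq => by have := hnn q hq; omega

theorem height_eq_zero_of_mem_elevated (he : e ∈ elevated k) : height e = 0 :=
  (mem_paths.1 (elevated_subset_paths he)).2.2.1

theorem elevated_zero : elevated 0 = ∅ := by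
  refine Set.eq_empty_of_forall_notMem fun e he => ?_
  have := elevated_subset_paths he
  rw [paths_zero] at this
  obtain ⟨a, m, b, rfl, -⟩ := he
  simp at this

theorem elevated_finite (k : ℕ) : (elevated k).Finite :=
  (paths_finite k).subset elevated_subset_paths

theorem eq_of_mem_elevated_of_mem_elevated {k' : ℕ} (he : e ∈ elevated k) (he' : e ∈ elevated k') :
    k = k' := by
  have h := (mem_paths.1 (elevated_subset_paths he)).2.1
  have h' := (mem_paths.1 (elevated_subset_paths he')).2.1
  omega

theorem height_pos_of_prefix_of_mem_elevated (he : e ∈ elevated k) {q : List (ℤ × ℤ)}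
    (hq : q <+: e) (hq₀ : q ≠ []) (hqe : q ≠ e) : 0 < height q := by
  obtain ⟨a, m, b, rfl, -, hnn, -⟩ := he
  obtain ⟨q', rfl, hq'⟩ := (prefix_cons_iff.1 hq).resolve_left hq₀
  rcases prefix_concat_iff.1 hq' with rfl | hq'
  · exact absurd rfl hqe
  · have := hnn q' hq'
    simp
    omega

theorem eq_of_prefix_of_mem_elevated {k' : ℕ} {e' : List (ℤ × ℤ)} (he : e ∈ elevated k)
    (he' : e' ∈ elevated k') (h : e <+: e') : e = e' := by
  by_contra hne
  have h₀ : e ≠ [] := by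
    obtain ⟨a, m, b, rfl, -⟩ := he
    exact cons_ne_nil _ _
  have := height_pos_of_prefix_of_mem_elevated he' h h₀ hne
  rw [height_eq_zero_of_mem_elevated he] at this
  exact this.false

theorem eq_of_append_eq_append_of_mem_elevated {k' : ℕ} {e' r r' : List (ℤ × ℤ)}
    (he : e ∈ elevated k) (he' : e' ∈ elevated k') (h : e ++ r = e' ++ r') : e = e' := by
  rcases prefix_or_prefix_of_prefix (prefix_append e r) (h ▸ prefix_append e' r') with h' | h'
  · exact eq_of_prefix_of_mem_elevated he he' h'
  · exact (eq_of_prefix_of_mem_elevated he' he h').symm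

theorem exists_first_passage {h : ℤ} {t : List (ℤ × ℤ)} (hh : 0 < h) (ht : StaysNonneg h t)
    (h₀ : h + height t = 0) :
    ∃ m x r, t = m ++ x :: r ∧ StaysNonneg (h - 1) m ∧ h + height m + x.2 = 0 := by
  induction t generalizing h with
  | nil => simp at h₀; omega
  | cons y t ih =>
    rw [staysNonneg_cons] at ht
    by_cases hy : h + y.2 = 0
    · exact ⟨[], y, t, rfl, by simp; omega, by simpa using hy⟩
    · obtain ⟨m, x, r, rfl, hm, hx⟩ :=
        ih (lt_of_le_of_ne ht.2.nonneg (Ne.symm hy)) ht.2 (by simp at h₀; linarith)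
      refine ⟨y :: m, x, r, rfl, ?_, by simp; linarith⟩
      simp only [staysNonneg_cons]
      exact ⟨by omega, by convert hm using 1; ring⟩

theorem exists_elevated_append (hp : p ∈ upPaths n) :
    ∃ kl ∈ antidiagonal n, ∃ e ∈ elevated kl.1, ∃ r ∈ paths kl.2, e ++ r = p := by
  obtain ⟨hp, a, t, ha, rfl⟩ := hp
  simp only [mem_paths, forall_mem_cons, width_cons, height_cons, staysNonneg_cons, le_refl,
    zero_add, true_and] at hp
  obtain ⟨⟨-, ht⟩, hw, hh, hnn⟩ := hp
  obtain ⟨m, x, r, rfl, hm, hx⟩ := exists_first_passage ha hnn (by omega)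
  simp only [forall_mem_append, forall_mem_cons] at ht
  obtain ⟨hmS, hxS, hrS⟩ := ht
  have := hm.nonneg_add_height
  obtain ⟨b, hb, rfl⟩ := exists_eq_down_of_mem_S6 hxS (by omega)
  simp only [width_append, width_cons, height_append, height_cons, staysNonneg_append,
    staysNonneg_cons] at hw hh hnn hx
  have heS : ∀ s ∈ (a, a) :: (m ++ [(b, -b)]), s ∈ S6 :=
    forall_mem_cons.2 ⟨up_mem_S6.2 ha, forall_mem_append.2 ⟨hmS, by simpa using hb⟩⟩
  obtain ⟨k, hk⟩ := exists_width_eq_two_mul heS (by simp; omega)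
  simp only [width_cons, width_append, width_nil] at hk
  have := width_nonneg hrS
  refine ⟨(k, n - k), mem_antidiagonal.2 (by omega), _, ⟨a, m, b, rfl, hmS, hm, by omega,
    by simp at hk ⊢; omega⟩, r, mem_paths.2 ⟨hrS, by push_cast; omega, by omega, ?_⟩, by simp⟩
  convert hnn.2.2 using 1
  omega

theorem startsUp_of_mem_elevated (he : e ∈ elevated k) : StartsUp e := by
  obtain ⟨a, m, b, rfl, -, hnn, -⟩ := he
  exact ⟨a, _, by linarith [hnn.nonneg], rfl⟩

theorem endsDown_of_mem_elevated (he : e ∈ elevated k) : EndsDown e := by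
  obtain ⟨a, m, b, rfl, -, hnn, hb, -⟩ := he
  exact ⟨(a, a) :: m, b, by linarith [hnn.nonneg_add_height], rfl⟩

theorem noFlatFrom_zero_of_mem_elevated (he : e ∈ elevated k) : NoFlatFrom 0 e := by
  obtain ⟨a, m, b, rfl, -, hnn, hb, -⟩ := he
  have := hnn.nonneg
  have := hnn.nonneg_add_height
  have hm := hnn.noFlatFrom_add_one
  rw [sub_add_cancel] at hm
  simp only [noFlatFrom_cons, noFlatFrom_append, noFlatFrom_nil, zero_add, hm, and_true, true_and]
  exact ⟨fun _ => by omega, fun _ => by omega⟩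

theorem ncard_eq_sum_elevated_mul {A : Set (List (ℤ × ℤ))} {C : ℕ → Set (List (ℤ × ℤ))}
    (hC : ∀ l, (C l).Finite)
    (hA : ∀ p, p ∈ A ↔ ∃ kl ∈ antidiagonal n, ∃ e ∈ elevated kl.1, ∃ r ∈ C kl.2, e ++ r = p) :
    A.ncard = ∑ kl ∈ antidiagonal n, (elevated kl.1).ncard * (C kl.2).ncard :=
  ncard_eq_sum_antidiagonal_of_unique_append elevated_finite hC
    (fun _ _ _ he he' => eq_of_mem_elevated_of_mem_elevated he he')
    (fun _ _ _ _ _ _ he he' h => eq_of_append_eq_append_of_mem_elevated he he' h) hA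

theorem mem_upPaths_iff :
    p ∈ upPaths n ↔ ∃ kl ∈ antidiagonal n, ∃ e ∈ elevated kl.1, ∃ r ∈ paths kl.2, e ++ r = p := by
  refine ⟨exists_elevated_append, ?_⟩
  rintro ⟨kl, hkl, e, he, r, hr, rfl⟩
  rw [mem_antidiagonal] at hkl
  exact ⟨hkl ▸ append_mem_paths (elevated_subset_paths he) hr, (startsUp_of_mem_elevated he).append⟩

theorem mem_upDownPaths_iff : p ∈ upDownPaths n ↔
    ∃ kl ∈ antidiagonal n, ∃ e ∈ elevated kl.1, ∃ r ∈ nilOrDownPaths kl.2, e ++ r = p := by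
  constructor
  · rintro ⟨hp, hdown⟩
    obtain ⟨kl, hkl, e, he, r, hr, rfl⟩ := mem_upPaths_iff.1 hp
    refine ⟨kl, hkl, e, he, r, ⟨hr, ?_⟩, rfl⟩
    by_cases hr₀ : r = []
    · exact Or.inl hr₀
    · exact Or.inr (hdown.of_append hr₀)
  · rintro ⟨kl, hkl, e, he, r, ⟨hr, hr'⟩, rfl⟩
    refine ⟨mem_upPaths_iff.2 ⟨kl, hkl, e, he, r, hr, rfl⟩, ?_⟩
    rcases hr' with rfl | hr'
    · simpa using endsDown_of_mem_elevated he
    · exact hr'.append_left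

theorem startsUp_of_mem_axisFlatFree (hp : p ∈ axisFlatFree (n + 1)) : StartsUp p := by
  rw [mem_axisFlatFree] at hp
  obtain ⟨hp, hflat⟩ := hp
  obtain _ | ⟨s, t⟩ := p
  · exact absurd rfl (ne_nil_of_mem_paths_succ hp)
  obtain ⟨hS, -, -, hnn⟩ := mem_paths.1 hp
  simp only [forall_mem_cons, staysNonneg_cons, noFlatFrom_cons, zero_add] at hS hnn hflat
  have := hnn.2.nonneg
  obtain ⟨a, ha, rfl⟩ := exists_eq_up_of_mem_S6 hS.1 (by omega)
  exact ⟨a, t, ha, rfl⟩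

theorem mem_axisFlatFree_succ_iff : p ∈ axisFlatFree (n + 1) ↔
    ∃ kl ∈ antidiagonal (n + 1), ∃ e ∈ elevated kl.1, ∃ r ∈ axisFlatFree kl.2, e ++ r = p := by
  constructor
  · intro hp
    obtain ⟨kl, hkl, e, he, r, hr, rfl⟩ :=
      exists_elevated_append ⟨(mem_axisFlatFree.1 hp).1, startsUp_of_mem_axisFlatFree hp⟩
    have h := (mem_axisFlatFree.1 hp).2
    rw [noFlatFrom_append, height_eq_zero_of_mem_elevated he, zero_add] at h
    exact ⟨kl, hkl, e, he, r, mem_axisFlatFree.2 ⟨hr, h.2⟩, rfl⟩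
  · rintro ⟨kl, hkl, e, he, r, hr, rfl⟩
    rw [mem_axisFlatFree] at hr ⊢
    rw [mem_antidiagonal] at hkl
    refine ⟨hkl ▸ append_mem_paths (elevated_subset_paths he) hr.1, ?_⟩
    rw [noFlatFrom_append, height_eq_zero_of_mem_elevated he, zero_add]
    exact ⟨noFlatFrom_zero_of_mem_elevated he, hr.2⟩

end Elevated

section Lowering

def raiseHead : List (ℤ × ℤ) → List (ℤ × ℤ) := modifyHead fun s => (s.1 + 1, s.2 + 1)

def raiseLast : List (ℤ × ℤ) → List (ℤ × ℤ) := modifyLast fun s => (s.1 + 1, s.2 - 1)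

@[simp] theorem raiseHead_cons (s : ℤ × ℤ) (t : List (ℤ × ℤ)) :
    raiseHead (s :: t) = (s.1 + 1, s.2 + 1) :: t := rfl

@[simp] theorem raiseLast_concat (t : List (ℤ × ℤ)) (s : ℤ × ℤ) :
    raiseLast (t ++ [s]) = t ++ [(s.1 + 1, s.2 - 1)] :=
  modifyLast_concat _ _ _

@[simp] theorem raiseLast_nil : raiseLast [] = [] := rfl

theorem raiseHead_injective : Function.Injective raiseHead := by
  rintro (_ | ⟨s, t⟩) (_ | ⟨s', t'⟩) h <;> simp_all [raiseHead, Prod.ext_iff]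

theorem raiseLast_injective : Function.Injective raiseLast := by
  intro l l' h
  rcases eq_nil_or_concat' l with rfl | ⟨t, s, rfl⟩ <;>
    rcases eq_nil_or_concat' l' with rfl | ⟨t', s', rfl⟩ <;> simp_all [Prod.ext_iff]

theorem raiseLast_cons (s : ℤ × ℤ) {t : List (ℤ × ℤ)} (ht : t ≠ []) :
    raiseLast (s :: t) = s :: raiseLast t :=
  modifyLast_append_of_right_ne_nil _ [s] t ht

def firstUnitUp : Set (List (ℤ × ℤ)) := {e | e.head? = some (1, 1)}

def lastUnitDown : Set (List (ℤ × ℤ)) := {e | e.getLast? = some (1, -1)}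

theorem elevated_inter_inter_eq_image (n : ℕ) :
    elevated (n + 1) ∩ firstUnitUp ∩ lastUnitDown =
      (fun w => (1, 1) :: (w ++ [(1, -1)])) '' paths n := by
  ext e
  constructor
  · rintro ⟨⟨⟨a, m, b, rfl, hm, hnn, hh, hw⟩, ha⟩, hb⟩
    simp [firstUnitUp, lastUnitDown, getLast?_cons] at ha hb
    subst ha hb
    exact ⟨m, mem_paths.2 ⟨hm, by push_cast at hw; omega, by omega, by simpa using hnn⟩, rfl⟩
  · rintro ⟨w, hw, rfl⟩
    rw [mem_paths] at hw
    refine ⟨⟨⟨1, w, 1, rfl, hw.1, by simpa using hw.2.2.2, by simp [hw.2.2.1], ?_⟩, rfl⟩, ?_⟩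
    · push_cast
      omega
    · simp [lastUnitDown, getLast?_cons]

theorem elevated_diff_inter_eq_image (n : ℕ) :
    (elevated (n + 1) \ firstUnitUp) ∩ lastUnitDown =
      (fun w => raiseHead w ++ [(1, -1)]) '' upPaths n := by
  ext e
  constructor
  · rintro ⟨⟨⟨a, m, b, rfl, hm, hnn, hh, hw⟩, ha⟩, hb⟩
    simp [firstUnitUp, lastUnitDown, getLast?_cons] at ha hb
    subst hb
    have := hnn.nonneg
    refine ⟨(a - 1, a - 1) :: m, ⟨mem_paths.2 ⟨?_, ?_, ?_, ?_⟩, a - 1, m, by omega, rfl⟩, by simp⟩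
    · exact forall_mem_cons.2 ⟨up_mem_S6.2 (by omega), hm⟩
    · push_cast at hw ⊢
      simp
      omega
    · simp
      omega
    · simpa using hnn
  · rintro ⟨w, ⟨hw, a, t, ha, rfl⟩, rfl⟩
    simp only [mem_paths, forall_mem_cons, width_cons, height_cons, staysNonneg_cons, le_refl,
      zero_add, true_and] at hw
    refine ⟨⟨⟨a + 1, t, 1, rfl, hw.1.2, by simpa using hw.2.2.2, by omega, ?_⟩, ?_⟩, ?_⟩
    · push_cast at hw ⊢
      omega
    · simp [firstUnitUp]
      omega
    · simp [lastUnitDown, getLast?_cons]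

theorem elevated_inter_diff_eq_image (n : ℕ) :
    (elevated (n + 1) ∩ firstUnitUp) \ lastUnitDown =
      (fun w => (1, 1) :: raiseLast w) '' downPaths n := by
  ext e
  constructor
  · rintro ⟨⟨⟨a, m, b, rfl, hm, hnn, hh, hw⟩, ha⟩, hb⟩
    simp [firstUnitUp, lastUnitDown, getLast?_cons] at ha hb
    subst ha
    have := hnn.nonneg_add_height
    refine ⟨m ++ [(b - 1, -(b - 1))], ⟨mem_paths.2 ⟨?_, ?_, ?_, ?_⟩, m, b - 1, by omega, rfl⟩, ?_⟩
    · exact forall_mem_append.2 ⟨hm, forall_mem_singleton.2 (down_mem_S6.2 (by omega))⟩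
    · push_cast at hw ⊢
      simp
      omega
    · simp
      omega
    · simp at hnn ⊢
      exact ⟨hnn, by omega⟩
    · simp
  · rintro ⟨w, ⟨hw, t, b, hb, rfl⟩, rfl⟩
    simp only [mem_paths, forall_mem_append, forall_mem_singleton, width_append, height_append,
      staysNonneg_append, width_cons, height_cons, width_nil, height_nil, staysNonneg_cons,
      staysNonneg_nil, zero_add] at hw
    refine ⟨⟨⟨1, t, b + 1, by simp; ring, hw.1.1, by simpa using hw.2.2.2.1, by omega, ?_⟩, rfl⟩,
      ?_⟩
    · push_cast at hw ⊢
      omega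
    · simp [lastUnitDown, getLast?_cons]
      omega

theorem elevated_diff_diff_eq_image (n : ℕ) :
    (elevated (n + 1) \ firstUnitUp) \ lastUnitDown =
      (fun w => raiseHead (raiseLast w)) '' upDownPaths n := by
  ext e
  constructor
  · rintro ⟨⟨⟨a, m, b, rfl, hm, hnn, hh, hw⟩, ha⟩, hb⟩
    simp [firstUnitUp, lastUnitDown, getLast?_cons] at ha hb
    have := hnn.nonneg
    have := hnn.nonneg_add_height
    refine ⟨(a - 1, a - 1) :: (m ++ [(b - 1, -(b - 1))]),
      ⟨⟨mem_paths.2 ⟨?_, ?_, ?_, ?_⟩, a - 1, _, by omega, rfl⟩, (a - 1, a - 1) :: m, b - 1,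
        by omega, rfl⟩, ?_⟩
    · exact forall_mem_cons.2 ⟨up_mem_S6.2 (by omega),
        forall_mem_append.2 ⟨hm, forall_mem_singleton.2 (down_mem_S6.2 (by omega))⟩⟩
    · push_cast at hw ⊢
      simp
      omega
    · simp
      omega
    · simp at hnn ⊢
      exact ⟨hnn, by omega⟩
    · simp [raiseLast_cons]
  · rintro ⟨w, ⟨⟨hw, hup⟩, hdown⟩, rfl⟩
    obtain ⟨a, m, b, ha, hb, rfl⟩ := hup.exists_eq_of_endsDown hdown
    simp only [mem_paths, forall_mem_cons, forall_mem_append, width_append, height_append,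
      width_cons, height_cons, width_nil, height_nil, staysNonneg_cons, staysNonneg_append,
      staysNonneg_nil, le_refl, zero_add, true_and] at hw
    refine ⟨⟨⟨a + 1, m, b + 1, by simp [raiseLast_cons]; ring, hw.1.2.1, by simpa using hw.2.2.2.1,
      by omega, ?_⟩, ?_⟩, ?_⟩
    · push_cast at hw ⊢
      omega
    · simp [firstUnitUp, raiseLast_cons]
      omega
    · simp [lastUnitDown, raiseLast_cons, getLast?_cons]
      omega

theorem ncard_elevated_succ (n : ℕ) :
    (elevated (n + 1)).ncard =
      (paths n).ncard + (upPaths n).ncard + (downPaths n).ncard + (upDownPaths n).ncard := by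
  have hE := elevated_finite (n + 1)
  rw [← Set.ncard_inter_add_ncard_sdiff_eq_ncard _ firstUnitUp hE,
    ← Set.ncard_inter_add_ncard_sdiff_eq_ncard _ lastUnitDown (hE.subset Set.inter_subset_left),
    ← Set.ncard_inter_add_ncard_sdiff_eq_ncard _ lastUnitDown (hE.subset Set.sdiff_subset),
    elevated_inter_inter_eq_image, elevated_inter_diff_eq_image, elevated_diff_inter_eq_image,
    elevated_diff_diff_eq_image,
    Set.ncard_image_of_injective _ fun w w' h => by simpa using h,
    Set.ncard_image_of_injective (f := fun w => (1, 1) :: raiseLast w) _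
      (cons_injective.comp raiseLast_injective),
    Set.ncard_image_of_injective (f := fun w => raiseHead w ++ [(1, -1)]) _
      ((append_left_injective _).comp raiseHead_injective),
    Set.ncard_image_of_injective (f := fun w => raiseHead (raiseLast w)) _
      (raiseHead_injective.comp raiseLast_injective)]
  ring

end Lowering

section FunctionalEquations

open PowerSeries

theorem gf_paths : gf paths = 1 + X * gf paths + gf upPaths := by
  ext (_ | n)
  · simp [paths_zero, upPaths_zero]
  · simp [ncard_paths_succ, coeff_one]

theorem gf_upPaths : gf upPaths = gf elevated * gf paths :=
  gf_eq_mul fun _ => ncard_eq_sum_elevated_mul paths_finite fun _ => mem_upPaths_iff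

theorem gf_downPaths : gf downPaths = gf upPaths := by
  ext n
  simp [downPaths_eq_image_reflect, Set.ncard_image_of_injective _ reflect_involutive.injective]

theorem gf_nilOrDownPaths : gf nilOrDownPaths = 1 + gf downPaths := by
  ext (_ | n)
  · simp [nilOrDownPaths, downPaths_zero, paths_zero]
  · simp [nilOrDownPaths_succ, coeff_one]

theorem gf_upDownPaths : gf upDownPaths = gf elevated * gf nilOrDownPaths :=
  gf_eq_mul fun _ => ncard_eq_sum_elevated_mul
    (fun l => (paths_finite l).subset Set.inter_subset_left) fun _ => mem_upDownPaths_iff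

theorem gf_elevated :
    gf elevated = X * (gf paths + gf upPaths + gf downPaths + gf upDownPaths) := by
  ext (_ | n)
  · simp [elevated_zero]
  · simp [ncard_elevated_succ]

theorem gf_axisFlatFree : gf axisFlatFree = 1 + gf elevated * gf axisFlatFree := by
  ext (_ | n)
  · simp [axisFlatFree_zero, elevated_zero]
  · rw [coeff_gf, ncard_eq_sum_elevated_mul (fun l => (paths_finite l).subset fun p hp =>
      (mem_axisFlatFree.1 hp).1) fun _ => mem_axisFlatFree_succ_iff]
    simp [coeff_mul, coeff_one]

theorem gf_axisFlatFree_quadratic :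
    X * (X - 5) * gf axisFlatFree ^ 2 + (1 + 4 * X - X ^ 2) * gf axisFlatFree - 1 = 0 := by
  set W := gf paths
  set E := gf elevated
  set A := gf axisFlatFree
  have hWE : W * (1 - X - E) = 1 := by linear_combination gf_paths + gf_upPaths
  have hE : E = X * (W * (1 + E) ^ 2 + E) := by
    linear_combination gf_elevated + X * (2 + E) * gf_upPaths + X * (1 + E) * gf_downPaths +
      X * gf_upDownPaths + X * E * gf_nilOrDownPaths
  have hE2 : E ^ 2 - (1 - 4 * X + X ^ 2) * E + X = 0 := by
    linear_combination (-(1 - X - E)) * hE - X * (1 + E) ^ 2 * hWE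
  linear_combination (-A ^ 2) * hE2 - (E * A + A - 1 - (1 - 4 * X + X ^ 2) * A) * gf_axisFlatFree

end FunctionalEquations

end S6Path

theorem gf_A_S6 (P s : PowerSeries ℚ)
    (hP : ∀ n : ℕ, PowerSeries.coeff n P =
      if n = 0 then 1
      else (Nat.card {p : List (ℤ × ℤ) // IsPath S6 n p ∧ NoFlatOnAxis p} : ℚ))
    (hs0 : PowerSeries.constantCoeff s = 1)
    (hs2 : s ^ 2 = (1 - PowerSeries.X) * (1 - 11 * PowerSeries.X + 7 * PowerSeries.X ^ 2 - PowerSeries.X ^ 3)) :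
    2 * PowerSeries.X * (PowerSeries.X - 5) * P = -1 - 4 * PowerSeries.X + PowerSeries.X ^ 2 + s := by
  have hP_gf : P = S6Path.gf S6Path.axisFlatFree := by
    ext n
    rw [hP, S6Path.coeff_gf]
    split_ifs with hn
    · simp [hn, S6Path.axisFlatFree_zero]
    · rw [← Nat.card_coe_set_eq]
      rfl
  have hsq : s ^ 2 = (2 * PowerSeries.X * (PowerSeries.X - 5) * P + 1 + 4 * PowerSeries.X -
      PowerSeries.X ^ 2) ^ 2 := by
    rw [hs2, hP_gf]
    linear_combination (-4 * PowerSeries.X * (PowerSeries.X - 5)) * S6Path.gf_axisFlatFree_quadratic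
  have hs := PowerSeries.eq_of_sq_eq_sq hsq (by simp [hs0]) (by simp [hs0])
  linear_combination -hs
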